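/- Let m, j be coprime integers, m > 0, m ∤ j. Then for all integers t coprime to m with t odd: ⟨−tj/m⟩ + ⟨2tj/m − t/2⟩ + ⟨−tj/m⟩ + ⟨t/2⟩ equals 3 if ⟨tj/m⟩ < 1/4, equals 2 if 1/4 < ⟨tj/m⟩ < 3/4, and equals 1 if ⟨tj/m⟩ > 3/4. -/

import Mathlib

/-!
Write `x = ⟨y⟩` for `y = tj/m`. Since `t` is a unit mod `m` and `m ∤ j`, `m ∤ tj`, so `x ≠ 0` and
`⟨-y⟩ = 1 - x`. As `t` is odd, `⟨t/2⟩ = 1/2` and `⟨2y - t/2⟩ = ⟨2x + 1/2⟩`, so the sum is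
`5/2 - 2x + ⟨2x + 1/2⟩`; the floor of `2x + 1/2 ∈ (1/2, 5/2)` is `0`, `1` or `2` according as
`x < 1/4`, `1/4 < x < 3/4` or `3/4 < x`.
-/

namespace Int

variable {K : Type*} [Field K] [LinearOrder K] [IsStrictOrderedRing K] [FloorRing K]

theorem fract_intCast_div_ne_zero {a m : ℤ} (hm : m ≠ 0) (ha : ¬ m ∣ a) :
    fract ((a : K) / m) ≠ 0 := by
  rintro h
  obtain ⟨z, hz⟩ := fract_eq_zero_iff.mp h
  rw [eq_div_iff (by exact_mod_cast hm)] at hz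
  exact ha ⟨z, by rw [mul_comm]; exact_mod_cast hz.symm⟩

theorem fract_odd_div_two {t : ℤ} (ht : Odd t) : fract ((t : K) / 2) = 1 / 2 := by
  obtain ⟨k, rfl⟩ := ht
  rw [fract_eq_iff]
  exact ⟨by norm_num, by norm_num, k, by push_cast; ring⟩

theorem fract_two_mul_sub_odd_div_two (y : K) {t : ℤ} (ht : Odd t) :
    fract (2 * y - t / 2) = fract (2 * fract y + 1 / 2) := by
  obtain ⟨k, rfl⟩ := ht
  rw [fract_eq_fract]
  exact ⟨2 * ⌊y⌋ - k - 1, by push_cast; linear_combination 2 * (floor_add_fract y).symm⟩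

end Int

open Int

variable {K : Type*} [Field K] [LinearOrder K] [IsStrictOrderedRing K] [FloorRing K]

theorem fract_sum_eq_of_odd {y : K} (hy : fract y ≠ 0) {t : ℤ} (ht : Odd t) :
    fract (-y) + fract (2 * y - t / 2) + fract (-y) + fract ((t : K) / 2)
      = 5 / 2 - 2 * fract y + fract (2 * fract y + 1 / 2) := by
  rw [fract_neg hy, fract_two_mul_sub_odd_div_two y ht, fract_odd_div_two ht]
  ring

theorem fract_two_mul_add_half_of_lt {x : K} (h0 : 0 ≤ x) (h : x < 1 / 4) :
    fract (2 * x + 1 / 2) = 2 * x + 1 / 2 :=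
  fract_eq_self.mpr ⟨by linarith, by linarith⟩

theorem fract_two_mul_add_half_of_mem {x : K} (h1 : 1 / 4 ≤ x) (h3 : x < 3 / 4) :
    fract (2 * x + 1 / 2) = 2 * x - 1 / 2 :=
  fract_eq_iff.mpr ⟨by linarith, by linarith, 1, by push_cast; ring⟩

theorem fract_two_mul_add_half_of_gt {x : K} (h3 : 3 / 4 ≤ x) (h : x < 1) :
    fract (2 * x + 1 / 2) = 2 * x - 3 / 2 :=
  fract_eq_iff.mpr ⟨by linarith, by linarith, 2, by push_cast; ring⟩

theorem stmt_14_general (m j : ℤ) (hm : 0 < m) (hndvd : ¬ m ∣ j) :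
    ∀ t : ℤ, Int.gcd t m = 1 → Odd t →
      ((Int.fract ((t : ℚ) * j / m) < 1 / 4 →
        Int.fract (-((t : ℚ) * j / m)) + Int.fract (2 * ((t : ℚ) * j / m) - t / 2) +
          Int.fract (-((t : ℚ) * j / m)) + Int.fract ((t : ℚ) / 2) = 3) ∧
       (1 / 4 < Int.fract ((t : ℚ) * j / m) → Int.fract ((t : ℚ) * j / m) < 3 / 4 →
        Int.fract (-((t : ℚ) * j / m)) + Int.fract (2 * ((t : ℚ) * j / m) - t / 2) +
          Int.fract (-((t : ℚ) * j / m)) + Int.fract ((t : ℚ) / 2) = 2) ∧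
       (3 / 4 < Int.fract ((t : ℚ) * j / m) →
        Int.fract (-((t : ℚ) * j / m)) + Int.fract (2 * ((t : ℚ) * j / m) - t / 2) +
          Int.fract (-((t : ℚ) * j / m)) + Int.fract ((t : ℚ) / 2) = 1)) := by
  intro t htm hodd
  have hndvd_tj : ¬ m ∣ t * j := fun h =>
    hndvd (Int.dvd_of_dvd_mul_right_of_gcd_one h (by rwa [Int.gcd_comm]))
  have hx : fract ((t : ℚ) * j / m) ≠ 0 := by
    exact_mod_cast fract_intCast_div_ne_zero (K := ℚ) hm.ne' hndvd_tj
  have hx0 := fract_nonneg ((t : ℚ) * j / m)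
  have hx1 := fract_lt_one ((t : ℚ) * j / m)
  rw [fract_sum_eq_of_odd hx hodd]
  refine ⟨fun h => ?_, fun h1 h3 => ?_, fun h => ?_⟩
  · rw [fract_two_mul_add_half_of_lt hx0 h]; ring
  · rw [fract_two_mul_add_half_of_mem h1.le h3]; ring
  · rw [fract_two_mul_add_half_of_gt h.le hx1]; ring

theorem stmt_14 (m j : ℤ) (hm : 0 < m) (hjm : Int.gcd j m = 1) (hndvd : ¬ m ∣ j) :
    ∀ t : ℤ, Int.gcd t m = 1 → Odd t →
      ((Int.fract ((t : ℚ) * j / m) < 1 / 4 →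
        Int.fract (-((t : ℚ) * j / m)) + Int.fract (2 * ((t : ℚ) * j / m) - t / 2) +
          Int.fract (-((t : ℚ) * j / m)) + Int.fract ((t : ℚ) / 2) = 3) ∧
       (1 / 4 < Int.fract ((t : ℚ) * j / m) → Int.fract ((t : ℚ) * j / m) < 3 / 4 →
        Int.fract (-((t : ℚ) * j / m)) + Int.fract (2 * ((t : ℚ) * j / m) - t / 2) +
          Int.fract (-((t : ℚ) * j / m)) + Int.fract ((t : ℚ) / 2) = 2) ∧
       (3 / 4 < Int.fract ((t : ℚ) * j / m) →
        Int.fract (-((t : ℚ) * j / m)) + Int.fract (2 * ((t : ℚ) * j / m) - t / 2) +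
          Int.fract (-((t : ℚ) * j / m)) + Int.fract ((t : ℚ) / 2) = 1)) :=
  stmt_14_general m j hm hndvd
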